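/- arXiv:2002.06756 — 2 statements merged into one kernel-verified Lean document; each statement's English description precedes it below -/
import Mathlib

section
/- For the Duffing–van der Pol system with drift f(x) = (x₂, −3x₁ − 2x₂ − 2x₂x₁² − x₁³) and diffusion matrix g(x) with rows (0,0) and (√2 x₁, √(2.5) x₂), let V(x) = x₁⁴ + x₂² + x₁x₂ + 4x₁². Then L V(x) := ⟨∇V(x), f(x)⟩ + ½ tr( g(x)^T D²V(x) g(x) ) = −4x₁²x₂² − x₁² − 0.5 x₂² − x₁⁴ ≤ −0.5 |x|² for all x ∈ ℝ². -/
/-!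
The gradient of `V` is `(4x₁³ + 8x₁ + x₂, x₁ + 2x₂)` and its Hessian is `[[12x₁² + 8, 1], [1, 2]]`.
Both columns of `g` lie on the `x₂`-axis, so only the Hessian entry `2` enters the Itô
correction, which is therefore `½ · 2 · (2x₁² + 2.5x₂²)`. In the drift term `⟨∇V, f⟩` the
cubic cross terms `x₁³x₂` and the terms `x₁x₂` cancel, leaving `-3x₁² - 3x₂² - 4x₁²x₂² - x₁⁴`.
The bound then only discards the nonpositive terms `-4x₁²x₂² - x₁⁴` and half of `-x₁²`.
-/

open EuclideanSpace

theorem EuclideanSpace.hasFDerivAt_apply_pow {ι : Type*} [Fintype ι]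
    (x : EuclideanSpace ℝ ι) (i : ι) (n : ℕ) :
    HasFDerivAt (fun y : EuclideanSpace ℝ ι => y i ^ n)
      (((n : ℝ) * x i ^ (n - 1)) • proj (𝕜 := ℝ) i) x :=
  (hasDerivAt_pow n _).comp_hasFDerivAt x (proj (𝕜 := ℝ) i).hasFDerivAt

local notation "ℝ²" => EuclideanSpace ℝ (Fin 2)

local notation "dx₀" => (proj 0 : ℝ² →L[ℝ] ℝ)

local notation "dx₁" => (proj 1 : ℝ² →L[ℝ] ℝ)

noncomputable section

namespace DuffingVanDerPol

def lyapunov (x : ℝ²) : ℝ := x 0 ^ 4 + x 1 ^ 2 + x 0 * x 1 + 4 * x 0 ^ 2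

def lyapunovDeriv (x : ℝ²) : ℝ² →L[ℝ] ℝ :=
  (4 * x 0 ^ 3 + 8 * x 0 + x 1) • dx₀ + (x 0 + 2 * x 1) • dx₁

def lyapunovHessian (x : ℝ²) : ℝ² →L[ℝ] ℝ² →L[ℝ] ℝ :=
  ContinuousLinearMap.smulRight ((12 * x 0 ^ 2 + 8) • dx₀ + dx₁) dx₀ +
    ContinuousLinearMap.smulRight (dx₀ + (2 : ℝ) • dx₁) dx₁

@[simp]
theorem lyapunovDeriv_apply (x v : ℝ²) :
    lyapunovDeriv x v = (4 * x 0 ^ 3 + 8 * x 0 + x 1) * v 0 + (x 0 + 2 * x 1) * v 1 := by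
  simp [lyapunovDeriv]

@[simp]
theorem lyapunovHessian_apply (x v w : ℝ²) :
    lyapunovHessian x v w = ((12 * x 0 ^ 2 + 8) * v 0 + v 1) * w 0 + (v 0 + 2 * v 1) * w 1 := by
  simp [lyapunovHessian]

theorem hasFDerivAt_lyapunov (x : ℝ²) : HasFDerivAt lyapunov (lyapunovDeriv x) x := by
  have hx₀ := (dx₀).hasFDerivAt (x := x)
  have hx₁ := (dx₁).hasFDerivAt (x := x)
  refine ((((hasFDerivAt_apply_pow x 0 4).add (hasFDerivAt_apply_pow x 1 2)).add
    (hx₀.mul hx₁)).add ((hasFDerivAt_apply_pow x 0 2).const_mul 4)).congr_fderiv ?_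
  ext v
  simp only [Nat.cast_ofNat, Nat.add_one_sub_one, pow_one, add_apply,
    smul_apply, PiLp.proj_apply, smul_eq_mul, lyapunovDeriv_apply]
  ring

theorem hasFDerivAt_lyapunovDeriv (x : ℝ²) :
    HasFDerivAt lyapunovDeriv (lyapunovHessian x) x := by
  have hx₀ := (dx₀).hasFDerivAt (x := x)
  have hx₁ := (dx₁).hasFDerivAt (x := x)
  have hD₀ : HasFDerivAt (fun y : ℝ² => 4 * y 0 ^ 3 + 8 * y 0 + y 1)
      ((12 * x 0 ^ 2 + 8) • dx₀ + dx₁) x := by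
    refine ((((hasFDerivAt_apply_pow x 0 3).const_mul 4).add (hx₀.const_mul 8)).add
      hx₁).congr_fderiv ?_
    ext v
    simp only [Nat.cast_ofNat, Nat.add_one_sub_one, add_apply,
      smul_apply, PiLp.proj_apply, smul_eq_mul]
    ring
  have hD₁ : HasFDerivAt (fun y : ℝ² => y 0 + 2 * y 1) (dx₀ + (2 : ℝ) • dx₁) x :=
    hx₀.add (hx₁.const_mul 2)
  have h₀ := hD₀.smul_const dx₀
  have h₁ := hD₁.smul_const dx₁
  exact h₀.add h₁

theorem generator_le_neg_half_sq_add_sq (a b : ℝ) :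
    -4 * a ^ 2 * b ^ 2 - a ^ 2 - 0.5 * b ^ 2 - a ^ 4 ≤ -0.5 * (a ^ 2 + b ^ 2) := by
  nlinarith [sq_nonneg a, sq_nonneg (a * b), sq_nonneg (a ^ 2)]

end DuffingVanDerPol

end

open DuffingVanDerPol in
theorem stmt_14
    (V : EuclideanSpace ℝ (Fin 2) → ℝ)
    (hV : ∀ x, V x = (x 0) ^ 4 + (x 1) ^ 2 + (x 0) * (x 1) + 4 * (x 0) ^ 2)
    (f : EuclideanSpace ℝ (Fin 2) → EuclideanSpace ℝ (Fin 2))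
    (hf : ∀ x, f x = (WithLp.equiv 2 (Fin 2 → ℝ)).symm
      ![x 1, -3 * (x 0) - 2 * (x 1) - 2 * (x 1) * (x 0) ^ 2 - (x 0) ^ 3])
    (gcol : EuclideanSpace ℝ (Fin 2) → Fin 2 → EuclideanSpace ℝ (Fin 2))
    (hg : ∀ x j, gcol x j = (WithLp.equiv 2 (Fin 2 → ℝ)).symm
      ![0, ![Real.sqrt 2 * (x 0), Real.sqrt 2.5 * (x 1)] j])
    (LV : EuclideanSpace ℝ (Fin 2) → ℝ)
    (hL : ∀ x, LV x = (inner ℝ (gradient V x) (f x) : ℝ) +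
      (1 / 2) * ∑ j : Fin 2, fderiv ℝ (fderiv ℝ V) x (gcol x j) (gcol x j)) :
    ∀ x : EuclideanSpace ℝ (Fin 2),
      LV x = -4 * (x 0) ^ 2 * (x 1) ^ 2 - (x 0) ^ 2 - 0.5 * (x 1) ^ 2 - (x 0) ^ 4 ∧
      LV x ≤ -0.5 * ‖x‖ ^ 2 := by
  intro x
  have hDV : fderiv ℝ V = lyapunovDeriv := by
    rw [show V = lyapunov from funext hV]
    exact funext fun y => (hasFDerivAt_lyapunov y).fderiv
  have hD2V : fderiv ℝ (fderiv ℝ V) x = lyapunovHessian x := by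
    rw [hDV]
    exact (hasFDerivAt_lyapunovDeriv x).fderiv
  have hLV : LV x = -4 * (x 0) ^ 2 * (x 1) ^ 2 - (x 0) ^ 2 - 0.5 * (x 1) ^ 2 - (x 0) ^ 4 := by
    have h2 : Real.sqrt 2 ^ 2 = 2 := Real.sq_sqrt (by norm_num)
    have h25 : Real.sqrt 2.5 ^ 2 = 2.5 := Real.sq_sqrt (by norm_num)
    rw [hL, hD2V, inner_gradient_left, hDV]
    simp only [hf, hg, WithLp.equiv_symm_apply, Fin.sum_univ_two, lyapunovDeriv_apply,
      lyapunovHessian_apply, Matrix.cons_val_zero, Matrix.cons_val_one, Matrix.cons_val_fin_one]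
    linear_combination x 0 ^ 2 * h2 + x 1 ^ 2 * h25
  refine ⟨hLV, ?_⟩
  rw [hLV, EuclideanSpace.real_norm_sq_eq, Fin.sum_univ_two]
  exact generator_le_neg_half_sq_add_sq (x 0) (x 1)
end

section
/- Let (V_k)_{k≥0} be a nonnegative adapted process on a filtered probability space with V_k = V_0 + A_k − U_k + M_k, where (A_k) and (U_k) are almost surely nondecreasing predictable processes with A_0 = U_0 = 0 and (M_k) is a martingale with M_0 = 0. Then almost surely on the event {lim_k A_k < ∞}, one has lim_k U_k < ∞ and lim_k V_k exists and is finite. -/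
/-!
Fix `c ≥ 0` and stop `M` at the first time `k` at which `V₀` or `A (k + 1)` exceeds `c`; since
`A` is predictable this is a stopping time. Before it, `M = V - V₀ - A + U ≥ -2c`, so the stopped
martingale is bounded below and converges a.s. On `{V₀ ≤ c, sup A ≤ c}` it is `M` itself; letting
`c` run through `ℕ`, `M`, and hence `V + U = V₀ + A + M`, converges a.s. on `{lim A < ∞}`. As `U`
is nondecreasing and `V ≥ 0`, `U` is then bounded, so `U` and `V = (V + U) - U` converge.
-/

open MeasureTheory Filter Topology

theorem exists_tendsto_of_tendsto_add_of_monotone {u v : ℕ → ℝ} (hv : ∀ n, 0 ≤ v n)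
    (hu : Monotone u) {L : ℝ} (h : Tendsto (fun n => v n + u n) atTop (𝓝 L)) :
    (∃ l, Tendsto u atTop (𝓝 l)) ∧ ∃ l, Tendsto v atTop (𝓝 l) := by
  obtain ⟨b, hb⟩ := h.bddAbove_range
  have hu_bdd : BddAbove (Set.range u) :=
    ⟨b, by rintro _ ⟨n, rfl⟩; exact (le_add_of_nonneg_left (hv n)).trans (hb ⟨n, rfl⟩)⟩
  have hu_lim := tendsto_atTop_ciSup hu hu_bdd
  exact ⟨⟨_, hu_lim⟩, _, (h.sub hu_lim).congr fun n => add_sub_cancel_right (v n) (u n)⟩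

namespace MeasureTheory

variable {Ω : Type*} {m0 : MeasurableSpace Ω} {μ : Measure Ω} {ℱ : Filtration ℕ m0}

theorem Supermartingale.exists_ae_tendsto_of_forall_le [IsFiniteMeasure μ] {f : ℕ → Ω → ℝ}
    (hf : Supermartingale f ℱ μ) {C : ℝ} (hC : ∀ n, ∀ᵐ ω ∂μ, C ≤ f n ω) :
    ∀ᵐ ω ∂μ, ∃ c, Tendsto (fun n => f n ω) atTop (𝓝 c) := by
  set g : ℕ → Ω → ℝ := f - fun _ _ => C
  have hg : Supermartingale g ℱ μ := hf.sub_martingale (martingale_const ℱ μ C)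
  -- `‖g n‖₁ = ∫ g n ≤ ∫ g 0` because `g` is a nonnegative supermartingale
  have hbdd : ∀ n, eLpNorm ((-g) n) 1 μ ≤ ENNReal.ofReal (∫ ω, g 0 ω ∂μ) := by
    intro n
    rw [Pi.neg_apply, eLpNorm_neg, eLpNorm_one_eq_lintegral_enorm,
      ← ofReal_integral_norm_eq_lintegral_enorm (hg.integrable n)]
    refine ENNReal.ofReal_le_ofReal (le_of_eq_of_le (integral_congr_ae (g := g n) ?_) ?_)
    · filter_upwards [hC n] with ω hω
      exact Real.norm_of_nonneg (sub_nonneg.mpr hω)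
    · simpa using hg.setIntegral_le n.zero_le MeasurableSet.univ
  filter_upwards [hg.neg.exists_ae_tendsto_of_bdd hbdd] with ω ⟨c, hc⟩
  exact ⟨C - c, by simpa [g] using hc.const_sub C⟩

theorem Martingale.stoppedProcess [IsFiniteMeasure μ] {f : ℕ → Ω → ℝ} (hf : Martingale f ℱ μ)
    {τ : Ω → ℕ∞} (hτ : IsStoppingTime ℱ τ) : Martingale (stoppedProcess f τ) ℱ μ :=
  have hneg : MeasureTheory.stoppedProcess (-f) τ = - MeasureTheory.stoppedProcess f τ := rfl
  martingale_iff.mpr ⟨by simpa [hneg] using (hf.neg.submartingale.stoppedProcess hτ).neg,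
    hf.submartingale.stoppedProcess hτ⟩

theorem Martingale.ae_exists_tendsto_of_stoppedProcess_ge [IsFiniteMeasure μ]
    {f : ℕ → Ω → ℝ} (hf : Martingale f ℱ μ) {τ : Ω → ℕ∞} (hτ : IsStoppingTime ℱ τ) {C : ℝ}
    (hC : ∀ n, ∀ᵐ ω ∂μ, C ≤ MeasureTheory.stoppedProcess f τ n ω) :
    ∀ᵐ ω ∂μ, τ ω = ⊤ → ∃ c, Tendsto (fun n => f n ω) atTop (𝓝 c) := by
  filter_upwards [(hf.stoppedProcess hτ).supermartingale.exists_ae_tendsto_of_forall_le hC]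
    with ω ⟨c, hc⟩ hτω
  exact ⟨c, hc.congr fun n => stoppedProcess_eq_of_le (hτω ▸ le_top)⟩

end MeasureTheory

section ExitTime

variable {Ω : Type*} {m0 : MeasurableSpace Ω}

noncomputable def exitTime (V₀ : Ω → ℝ) (A : ℕ → Ω → ℝ) (c : ℝ) : Ω → ℕ∞ :=
  hittingAfter (fun k ω => max (V₀ ω) (A (k + 1) ω)) (Set.Ioi c) 0

theorem isStoppingTime_exitTime {ℱ : Filtration ℕ m0} {V₀ : Ω → ℝ} {A : ℕ → Ω → ℝ}
    (hV₀ : Measurable[ℱ 0] V₀) (hA : ∀ k, StronglyMeasurable[ℱ k] (A (k + 1))) (c : ℝ) :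
    IsStoppingTime ℱ (exitTime V₀ A c) :=
  Adapted.isStoppingTime_hittingAfter
    (fun k => (hV₀.mono (ℱ.mono k.zero_le) le_rfl).max (hA k).measurable) measurableSet_Ioi

theorem exitTime_eq_top_iff {V₀ : Ω → ℝ} {A : ℕ → Ω → ℝ} {c : ℝ} {ω : Ω} :
    exitTime V₀ A c ω = ⊤ ↔ V₀ ω ≤ c ∧ ∀ k, A (k + 1) ω ≤ c :=
  hittingAfter_eq_top_iff.trans (by simp [forall_and])

theorem neg_two_mul_le_stoppedProcess_exitTime {V A U M : ℕ → Ω → ℝ} {c : ℝ} (hc : 0 ≤ c)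
    {ω : Ω} (hV : ∀ k, 0 ≤ V k ω) (hU : ∀ k, 0 ≤ U k ω)
    (hrep : ∀ k, V k ω = V 0 ω + A k ω - U k ω + M k ω) (hM0 : M 0 ω = 0) (n : ℕ) :
    -(2 * c) ≤ stoppedProcess M (exitTime (V 0) A c) n ω := by
  set τ := exitTime (V 0) A c
  obtain ⟨m, hmτ, hm⟩ : ∃ m : ℕ, (m : ℕ∞) ≤ τ ω ∧ stoppedProcess M τ n ω = M m ω := by
    rcases le_total (n : ℕ∞) (τ ω) with h | h
    · exact ⟨n, h, stoppedProcess_eq_of_le h⟩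
    · obtain ⟨k, hk⟩ := WithTop.ne_top_iff_exists.mp (ne_top_of_le_ne_top (by simp) h)
      exact ⟨k, hk.le, by rw [stoppedProcess_eq_of_ge h, ← hk]; rfl⟩
  rw [hm]
  cases m with
  | zero => linarith
  | succ j =>
    have hj := notMem_of_lt_hittingAfter (lt_of_lt_of_le (Nat.cast_lt.mpr j.lt_succ_self) hmτ)
      j.zero_le
    simp only [Set.mem_Ioi, lt_max_iff, not_or, not_lt] at hj
    linarith [hrep (j + 1), hV (j + 1), hU (j + 1)]

theorem ae_exists_tendsto_of_exitTime_eq_top {μ : Measure Ω} [IsFiniteMeasure μ]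
    {ℱ : Filtration ℕ m0} {V A U M : ℕ → Ω → ℝ} (hV : ∀ k ω, 0 ≤ V k ω)
    (hV₀ : Measurable[ℱ 0] (V 0)) (hrep : ∀ k ω, V k ω = V 0 ω + A k ω - U k ω + M k ω)
    (hU0 : ∀ ω, U 0 ω = 0) (hUmono : ∀ᵐ ω ∂μ, Monotone fun k => U k ω)
    (hApred : ∀ k, StronglyMeasurable[ℱ k] (A (k + 1))) (hM : Martingale M ℱ μ)
    (hM0 : ∀ ω, M 0 ω = 0) {c : ℝ} (hc : 0 ≤ c) :
    ∀ᵐ ω ∂μ, exitTime (V 0) A c ω = ⊤ → ∃ l, Tendsto (fun n => M n ω) atTop (𝓝 l) :=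
  hM.ae_exists_tendsto_of_stoppedProcess_ge (isStoppingTime_exitTime hV₀ hApred c) fun n => by
    filter_upwards [hUmono] with ω hU
    exact neg_two_mul_le_stoppedProcess_exitTime hc (hV · ω) (fun k => hU0 ω ▸ hU k.zero_le)
      (hrep · ω) (hM0 ω) n

end ExitTime

theorem stmt_17_general {Ω : Type*} {m0 : MeasurableSpace Ω} {μ : Measure Ω}
    [IsProbabilityMeasure μ] (ℱ : Filtration ℕ m0)
    (V A U M : ℕ → Ω → ℝ)
    (hVnonneg : ∀ k ω, 0 ≤ V k ω)
    (hVadapted : Adapted ℱ V)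
    (hrep : ∀ k ω, V k ω = V 0 ω + A k ω - U k ω + M k ω)
    (hU0 : ∀ ω, U 0 ω = 0)
    (hAmono : ∀ᵐ ω ∂μ, Monotone fun k => A k ω)
    (hUmono : ∀ᵐ ω ∂μ, Monotone fun k => U k ω)
    (hApred : ∀ k, StronglyMeasurable[ℱ k] (A (k + 1)))
    (hM : Martingale M ℱ μ) (hM0 : ∀ ω, M 0 ω = 0) :
    ∀ᵐ ω ∂μ,
      (∃ l : ℝ, Tendsto (fun k => A k ω) atTop (nhds l)) →
        (∃ l : ℝ, Tendsto (fun k => U k ω) atTop (nhds l)) ∧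
        (∃ l : ℝ, Tendsto (fun k => V k ω) atTop (nhds l)) := by
  have hM_lim : ∀ᵐ ω ∂μ, ∀ c : ℕ, exitTime (V 0) A c ω = ⊤ →
      ∃ l, Tendsto (fun n => M n ω) atTop (𝓝 l) :=
    ae_all_iff.mpr fun c => ae_exists_tendsto_of_exitTime_eq_top hVnonneg (hVadapted 0) hrep
      hU0 hUmono hApred hM hM0 c.cast_nonneg
  filter_upwards [hM_lim, hAmono, hUmono] with ω hM_lim hA hU
  rintro ⟨l, hl⟩
  obtain ⟨c, hc⟩ := exists_nat_ge (max (V 0 ω) l)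
  obtain ⟨m, hm⟩ := hM_lim c (exitTime_eq_top_iff.mpr ⟨(le_max_left _ _).trans hc,
    fun k => (hA.ge_of_tendsto hl (k + 1)).trans ((le_max_right _ _).trans hc)⟩)
  refine exists_tendsto_of_tendsto_add_of_monotone (hVnonneg · ω) hU (L := V 0 ω + l + m) ?_
  exact ((tendsto_const_nhds.add hl).add hm).congr fun k => by rw [hrep k ω]; ring

theorem stmt_17 {Ω : Type*} {m0 : MeasurableSpace Ω} {μ : Measure Ω}
    [IsProbabilityMeasure μ] (ℱ : Filtration ℕ m0)
    (V A U M : ℕ → Ω → ℝ)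
    (hVnonneg : ∀ k ω, 0 ≤ V k ω)
    (hVadapted : Adapted ℱ V)
    (hrep : ∀ k ω, V k ω = V 0 ω + A k ω - U k ω + M k ω)
    (hA0 : ∀ ω, A 0 ω = 0) (hU0 : ∀ ω, U 0 ω = 0)
    (hAmono : ∀ᵐ ω ∂μ, Monotone fun k => A k ω)
    (hUmono : ∀ᵐ ω ∂μ, Monotone fun k => U k ω)
    (hApred : ∀ k, StronglyMeasurable[ℱ k] (A (k + 1)))
    (hUpred : ∀ k, StronglyMeasurable[ℱ k] (U (k + 1)))
    (hM : Martingale M ℱ μ) (hM0 : ∀ ω, M 0 ω = 0) :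
    ∀ᵐ ω ∂μ,
      (∃ l : ℝ, Tendsto (fun k => A k ω) atTop (nhds l)) →
        (∃ l : ℝ, Tendsto (fun k => U k ω) atTop (nhds l)) ∧
        (∃ l : ℝ, Tendsto (fun k => V k ω) atTop (nhds l)) :=
  stmt_17_general ℱ V A U M hVnonneg hVadapted hrep hU0 hAmono hUmono hApred hM hM0
end
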